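/- arXiv:2408.00750 — 7 statements merged into one kernel-verified Lean document; each statement's English description precedes it below -/
import Mathlib

section
/- Let T be a polynomial of degree t ≥ 1 over ℤ/p^αℤ whose constant coefficient and leading coefficient are both units (nonzero mod p). Write the power series 1/T = Σ_{n≥0} a(n) z^n. Then the sequence a(n) is purely periodic, and if m is its period length, then a(m − i) = 0 for all i with 1 ≤ i ≤ t − 1, while a(m − t) is a unit (in particular nonzero). -/
/-!
Since `T(0)` is a unit, `X` is invertible in the finite ring `R[X]/(T)`, so `T ∣ X ^ N - 1` for its
order `N`; as `deg T ≥ 1`, this makes `1/T` purely periodic. If `M` is any period and `A` is the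
truncation of `1/T` below degree `M`, then `(1/T) * (1 - X ^ M) = A`, i.e. `T * A = 1 - X ^ M`.
Since the leading coefficient of `T` is a unit, comparing leading terms gives `deg A = M - t` and
that the leading coefficient `a(M - t)` of `A` is a unit, while the `a(M - i)` with `1 ≤ i < t` are
coefficients of `A` above its degree.
-/

open Function
open scoped Polynomial

namespace AdjoinRoot

variable {R : Type*} [CommRing R]

lemma isUnit_root {T : R[X]} (h0 : IsUnit (T.coeff 0)) : IsUnit (root T) := by
  have key : root T * mk T (Polynomial.divX T) + of T (T.coeff 0) = 0 := by
    rw [← mk_X, ← mk_C, ← map_mul, ← map_add, Polynomial.X_mul_divX_add, mk_self]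
  have hinv : of T (T.coeff 0) * of T ↑h0.unit⁻¹ = 1 := by
    rw [← map_mul, IsUnit.mul_val_inv, map_one]
  refine isUnit_iff_exists_inv.mpr ⟨-mk T (Polynomial.divX T) * of T ↑h0.unit⁻¹, ?_⟩
  linear_combination (-(of T ↑h0.unit⁻¹)) * key + hinv

end AdjoinRoot

namespace Polynomial

variable {R : Type*} [CommRing R]

lemma natDegree_one_sub_X_pow [Nontrivial R] (M : ℕ) : (1 - X ^ M : R[X]).natDegree = M := by
  rw [← neg_sub, natDegree_neg, ← C_1, natDegree_X_pow_sub_C]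

lemma leadingCoeff_one_sub_X_pow [Nontrivial R] {M : ℕ} (hM : 0 < M) :
    (1 - X ^ M : R[X]).leadingCoeff = -1 := by
  rw [← neg_sub, leadingCoeff_neg, ← C_1, leadingCoeff_X_pow_sub_C hM]

lemma natDegree_add_natDegree_and_isUnit_of_mul_eq_one_sub_X_pow [Nontrivial R] {T B : R[X]}
    {M : ℕ} (hlead : IsUnit T.leadingCoeff) (hM : 0 < M) (h : T * B = 1 - X ^ M) :
    T.natDegree + B.natDegree = M ∧ IsUnit B.leadingCoeff := by
  have hB : B ≠ 0 := by
    rintro rfl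
    have := natDegree_one_sub_X_pow (R := R) M
    rw [← h, mul_zero, natDegree_zero] at this
    omega
  have hprod : T.leadingCoeff * B.leadingCoeff ≠ 0 := by
    rwa [Ne, hlead.mul_right_eq_zero, leadingCoeff_eq_zero]
  refine ⟨?_, isUnit_of_mul_isUnit_right (x := T.leadingCoeff) ?_⟩
  · rw [← natDegree_mul' hprod, h, natDegree_one_sub_X_pow]
  · rw [← leadingCoeff_mul' hprod, h, leadingCoeff_one_sub_X_pow hM]
    exact isUnit_one.neg

lemma Monic.exists_dvd_X_pow_sub_one [Finite R] {T : R[X]} (hT : T.Monic)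
    (h0 : IsUnit (T.coeff 0)) : ∃ N, 0 < N ∧ T ∣ X ^ N - 1 := by
  have := hT.finite_adjoinRoot
  have : Finite (AdjoinRoot T) := Module.finite_of_finite R
  obtain ⟨u, hu⟩ := AdjoinRoot.isUnit_root h0
  refine ⟨orderOf u, orderOf_pos u, ?_⟩
  rw [← AdjoinRoot.mk_eq_zero, map_sub, map_pow, AdjoinRoot.mk_X, map_one, ← hu,
    ← Units.val_pow_eq_pow_val, pow_orderOf_eq_one, Units.val_one, sub_self]

lemma exists_dvd_X_pow_sub_one [Finite R] {T : R[X]} (h0 : IsUnit (T.coeff 0))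
    (hlead : IsUnit T.leadingCoeff) : ∃ N, 0 < N ∧ T ∣ X ^ N - 1 := by
  set T' := C (↑hlead.unit⁻¹ : R) * T
  have hT' : T'.Monic := monic_C_mul_of_mul_leadingCoeff_eq_one (by simp)
  have h0' : IsUnit (T'.coeff 0) := by
    rw [coeff_C_mul]
    exact hlead.unit⁻¹.isUnit.mul h0
  obtain ⟨N, hN, hdvd⟩ := hT'.exists_dvd_X_pow_sub_one h0'
  exact ⟨N, hN, (Dvd.intro_left _ rfl).trans hdvd⟩

end Polynomial

namespace PowerSeries

variable {R : Type*} [CommRing R]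

lemma coeff_mul_one_sub_X_pow (F : R⟦X⟧) (M k : ℕ) :
    coeff k (F * (1 - X ^ M)) = coeff k F - if M ≤ k then coeff (k - M) F else 0 := by
  rw [mul_sub, mul_one, map_sub, coeff_mul_X_pow']

lemma periodic_coeff_of_mul_one_sub_X_pow_eq {F : R⟦X⟧} {B : R[X]} {M : ℕ}
    (hB : B.natDegree < M) (h : F * (1 - X ^ M) = (B : R⟦X⟧)) : Periodic (coeff · F) M := by
  intro n
  have := congrArg (coeff (n + M)) h
  rwa [coeff_mul_one_sub_X_pow, if_pos (Nat.le_add_left M n), Nat.add_sub_cancel,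
    Polynomial.coeff_coe, Polynomial.coeff_eq_zero_of_natDegree_lt (by omega), sub_eq_zero] at this

lemma mul_one_sub_X_pow_eq_trunc {F : R⟦X⟧} {M : ℕ} (hper : Periodic (coeff · F) M) :
    F * (1 - X ^ M) = (trunc M F : R⟦X⟧) := by
  ext k
  rw [coeff_mul_one_sub_X_pow, Polynomial.coeff_coe, coeff_trunc]
  by_cases hk : M ≤ k
  · obtain ⟨j, rfl⟩ := Nat.exists_eq_add_of_le' hk
    rw [if_pos hk, if_neg (by omega), Nat.add_sub_cancel, sub_eq_zero]
    exact hper j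
  · rw [if_neg hk, if_pos (by omega), sub_zero]

lemma coe_one_sub_X_pow (M : ℕ) : ((1 - Polynomial.X ^ M : R[X]) : R⟦X⟧) = 1 - X ^ M := by
  rw [Polynomial.coe_sub, Polynomial.coe_one, Polynomial.coe_pow, Polynomial.coe_X]

variable {F : R⟦X⟧} {T : R[X]} {M : ℕ}

lemma mul_trunc_eq_one_sub_X_pow (hF : F * (T : R⟦X⟧) = 1) (hper : Periodic (coeff · F) M) :
    T * trunc M F = 1 - Polynomial.X ^ M := by
  apply Polynomial.coe_injective
  rw [Polynomial.coe_mul, ← mul_one_sub_X_pow_eq_trunc hper, ← mul_assoc, mul_comm _ F, hF,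
    one_mul, coe_one_sub_X_pow]

lemma periodic_coeff_of_mul_eq_one_sub_X_pow [Nontrivial R] (hF : F * (T : R⟦X⟧) = 1)
    (hT : 0 < T.natDegree) (hlead : IsUnit T.leadingCoeff) (hM : 0 < M) {B : R[X]}
    (h : T * B = 1 - Polynomial.X ^ M) : Periodic (coeff · F) M := by
  have hdeg :=
    (Polynomial.natDegree_add_natDegree_and_isUnit_of_mul_eq_one_sub_X_pow hlead hM h).1
  refine periodic_coeff_of_mul_one_sub_X_pow_eq (B := B) (by omega) ?_
  rw [← coe_one_sub_X_pow, ← h, Polynomial.coe_mul, ← mul_assoc, hF, one_mul]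

lemma exists_periodic_coeff [Finite R] [Nontrivial R] (hF : F * (T : R⟦X⟧) = 1)
    (hT : 0 < T.natDegree) (h0 : IsUnit (T.coeff 0)) (hlead : IsUnit T.leadingCoeff) :
    ∃ M, 0 < M ∧ Periodic (coeff · F) M := by
  obtain ⟨N, hN, A, hA⟩ := Polynomial.exists_dvd_X_pow_sub_one h0 hlead
  exact ⟨N, hN, periodic_coeff_of_mul_eq_one_sub_X_pow hF hT hlead hN (B := -A)
    (by rw [mul_neg, ← hA, neg_sub])⟩

lemma coeff_sub_eq_zero_and_isUnit_of_periodic [Nontrivial R] (hF : F * (T : R⟦X⟧) = 1)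
    (hT : 0 < T.natDegree) (hlead : IsUnit T.leadingCoeff) (hM : 0 < M)
    (hper : Periodic (coeff · F) M) :
    (∀ i, 1 ≤ i → i < T.natDegree → coeff (M - i) F = 0) ∧
      IsUnit (coeff (M - T.natDegree) F) := by
  obtain ⟨hdeg, hunit⟩ := Polynomial.natDegree_add_natDegree_and_isUnit_of_mul_eq_one_sub_X_pow
    hlead hM (mul_trunc_eq_one_sub_X_pow hF hper)
  have hcoeff : ∀ k < M, (trunc M F).coeff k = coeff k F := fun k hk => by
    rw [coeff_trunc, if_pos hk]
  refine ⟨fun i hi hiT => ?_, ?_⟩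
  · rw [← hcoeff _ (by omega), Polynomial.coeff_eq_zero_of_natDegree_lt (by omega)]
  · rwa [← hcoeff _ (by omega), show M - T.natDegree = (trunc M F).natDegree by omega]

end PowerSeries

open PowerSeries in
theorem stmt_3_general (p : ℕ) [Fact p.Prime] (α : ℕ)
    (T : Polynomial (ZMod (p ^ α))) (t : ℕ) (ht : T.natDegree = t) (ht1 : 1 ≤ t)
    (h0 : IsUnit (T.coeff 0)) (hlead : IsUnit T.leadingCoeff)
    (F : PowerSeries (ZMod (p ^ α))) (hF : F * (T : PowerSeries (ZMod (p ^ α))) = 1)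
    (a : ℕ → ZMod (p ^ α)) (ha : ∀ n, a n = PowerSeries.coeff n F) :
    ∃ m : ℕ, 0 < m ∧ (∀ n, a (n + m) = a n) ∧
      (∀ m', 0 < m' → (∀ n, a (n + m') = a n) → m ≤ m') ∧
      (∀ i, 1 ≤ i → i ≤ t - 1 → a (m - i) = 0) ∧
      IsUnit (a (m - t)) := by
  subst ht
  have hT : 0 < T.natDegree := ht1
  have : NeZero (p ^ α) := ⟨pow_ne_zero _ (Fact.out : p.Prime).ne_zero⟩
  have : Nontrivial (ZMod (p ^ α)) :=
    Polynomial.nontrivial_iff.mp (nontrivial_of_ne T 0 (Polynomial.ne_zero_of_natDegree_gt hT))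
  obtain rfl : a = (coeff · F) := funext ha
  classical
  have hex := exists_periodic_coeff hF hT h0 hlead
  obtain ⟨hm, hper⟩ := Nat.find_spec hex
  obtain ⟨hzero, hunit⟩ := coeff_sub_eq_zero_and_isUnit_of_periodic hF hT hlead hm hper
  exact ⟨Nat.find hex, hm, hper, fun m' hm' hper' => Nat.find_min' hex ⟨hm', hper'⟩,
    fun i hi hit => hzero i hi (by omega), hunit⟩

/-- Let `T` be a polynomial of degree `t ≥ 1` over `ℤ/p^αℤ` whose constant and leading
coefficients are units, and write `1/T = Σ a(n) zⁿ` (i.e. `F * T = 1` in power series).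
Then `a` is purely periodic, and if `m` is its (minimal) period length, then
`a(m - i) = 0` for `1 ≤ i ≤ t - 1`, while `a(m - t)` is a unit. -/
theorem stmt_3 (p : ℕ) [Fact p.Prime] (α : ℕ) (hα : 1 ≤ α)
    (T : Polynomial (ZMod (p ^ α))) (t : ℕ) (ht : T.natDegree = t) (ht1 : 1 ≤ t)
    (h0 : IsUnit (T.coeff 0)) (hlead : IsUnit T.leadingCoeff)
    (F : PowerSeries (ZMod (p ^ α))) (hF : F * (T : PowerSeries (ZMod (p ^ α))) = 1)
    (a : ℕ → ZMod (p ^ α)) (ha : ∀ n, a n = PowerSeries.coeff n F) :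
    ∃ m : ℕ, 0 < m ∧ (∀ n, a (n + m) = a n) ∧
      (∀ m', 0 < m' → (∀ n, a (n + m') = a n) → m ≤ m') ∧
      (∀ i, 1 ≤ i → i ≤ t - 1 → a (m - i) = 0) ∧
      IsUnit (a (m - t)) :=
  stmt_3_general p α T t ht ht1 h0 hlead F hF a ha
end

section
/- Define the Cartier operator Λ_r on univariate Laurent series over ℤ/p^αℤ by Λ_r(Σ a(n) x^n) = Σ_{n ≡ r mod p} a(n) x^{(n−r)/p}. Then for all Laurent series F and G over ℤ/p^αℤ (with F a Laurent polynomial, say), Λ_r(G · F^{p^α}) = Λ_r(G) · F^{p^{α−1}}. -/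
/-!
`Λ_r` is linear over Laurent polynomials in `x^p`: `Λ_r (G · H(x^p)) = Λ_r(G) · H`, as one checks
on monomials. So it suffices to show `F^{p^α} = (F^{p^{α-1}})(x^p)` over `ℤ/p^αℤ`. Fermat's little
theorem on the coefficients and the freshman's dream give `F^p ≡ F(x^p) (mod p)`, and raising a
congruence mod `p` to the power `p^{α-1}` makes it a congruence mod `p^α`, i.e. an equality.
-/

open Finsupp in
/-- The Cartier operator `Λ_r` on Laurent polynomials: the coefficient of `xⁿ` in
`cartier p r S` is the coefficient of `x^(p*n + r)` in `S`, i.e.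
`Λ_r (Σ a(n) xⁿ) = Σ_{n ≡ r mod p} a(n) x^((n - r)/p)`. -/
noncomputable def cartier {A : Type*} [CommRing A] (p : ℕ) [NeZero p] (r : ℤ)
    (S : LaurentPolynomial A) : LaurentPolynomial A :=
  AddMonoidAlgebra.ofCoeff (Finsupp.comapDomain (fun n : ℤ => (p : ℤ) * n + r) S.coeff
    (Set.injOn_of_injective (fun a b h => by
      have hp : (p : ℤ) ≠ 0 := by exact_mod_cast (NeZero.ne p)
      have := mul_left_cancel₀ hp (by linarith [h] : (p : ℤ) * a = p * b)
      exact this)))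

open LaurentPolynomial

variable {A : Type*} [CommRing A]

namespace LaurentPolynomial

noncomputable def expand (p : ℕ) : A[T;T⁻¹] →+* A[T;T⁻¹] :=
  AddMonoidAlgebra.mapDomainRingHom A (AddMonoidHom.mulLeft (p : ℤ))

theorem expand_single (p : ℕ) (n : ℤ) (a : A) :
    expand p (.single n a : A[T;T⁻¹]) = .single (p * n) a :=
  AddMonoidAlgebra.mapDomain_single

end LaurentPolynomial

section Cartier

variable (p : ℕ) [NeZero p] (r : ℤ)

@[simp]
theorem cartier_coeff (S : A[T;T⁻¹]) (n : ℤ) : (cartier p r S).coeff n = S.coeff (p * n + r) :=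
  rfl

theorem cartier_add (S S' : A[T;T⁻¹]) : cartier p r (S + S') = cartier p r S + cartier p r S' := by
  ext n
  simp

theorem cartier_zero : cartier p r (0 : A[T;T⁻¹]) = 0 := by
  ext n
  simp

theorem cartier_single_of_eq (n : ℤ) (a : A) :
    cartier p r (.single (p * n + r) a : A[T;T⁻¹]) = .single n a := by
  ext m
  have hp : (p : ℤ) ≠ 0 := Int.natCast_ne_zero.2 (NeZero.ne p)
  simp only [cartier_coeff, AddMonoidAlgebra.coeff_single, Finsupp.single_apply, add_left_inj,
    mul_right_inj' hp]

theorem cartier_single_of_forall_ne {m : ℤ} (h : ∀ n : ℤ, p * n + r ≠ m) (a : A) :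
    cartier p r (.single m a : A[T;T⁻¹]) = 0 := by
  ext n
  simp only [cartier_coeff, AddMonoidAlgebra.coeff_single, Finsupp.single_apply, if_neg (h n).symm,
    AddMonoidAlgebra.coeff_zero, Finsupp.zero_apply]

theorem cartier_single_mul_expand_single (a c : ℤ) (b d : A) :
    cartier p r (.single a b * expand p (.single c d) : A[T;T⁻¹]) =
      cartier p r (.single a b) * .single c d := by
  rw [expand_single, AddMonoidAlgebra.single_mul_single]
  by_cases ha : ∃ n : ℤ, p * n + r = a
  · obtain ⟨n, rfl⟩ := ha
    rw [show p * n + r + p * c = p * (n + c) + r by ring, cartier_single_of_eq,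
      cartier_single_of_eq, AddMonoidAlgebra.single_mul_single]
  · push Not at ha
    have hac : ∀ n : ℤ, p * n + r ≠ a + p * c := fun n hn => ha (n - c) (by linarith)
    rw [cartier_single_of_forall_ne p r hac, cartier_single_of_forall_ne p r ha, zero_mul]

theorem cartier_mul_expand (G H : A[T;T⁻¹]) :
    cartier p r (G * expand p H) = cartier p r G * H := by
  induction G using AddMonoidAlgebra.induction_linear with
  | zero => rw [zero_mul, cartier_zero, zero_mul]
  | add G G' hG hG' => rw [add_mul, cartier_add, hG, hG', cartier_add, add_mul]
  | single a b =>
    induction H using AddMonoidAlgebra.induction_linear with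
    | zero => rw [map_zero, mul_zero, cartier_zero, mul_zero]
    | add H H' hH hH' => rw [map_add, mul_add, cartier_add, hH, hH', mul_add]
    | single c d => exact cartier_single_mul_expand_single p r a c b d

end Cartier

theorem Int.natCast_dvd_pow_sub_self (p : ℕ) [Fact p.Prime] (k : ℤ) : (p : ℤ) ∣ k ^ p - k := by
  rw [← ZMod.intCast_zmod_eq_zero_iff_dvd]
  push_cast
  rw [ZMod.pow_card, sub_self]

theorem ZMod.natCast_dvd_pow_sub_self {n : ℕ} (p : ℕ) [Fact p.Prime] (b : ZMod n) :
    (p : ZMod n) ∣ b ^ p - b := by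
  obtain ⟨k, rfl⟩ := ZMod.intCast_surjective b
  simpa using map_dvd (Int.castRingHom (ZMod n)) (Int.natCast_dvd_pow_sub_self p k)

namespace LaurentPolynomial

variable {p : ℕ} [Fact p.Prime]

theorem natCast_dvd_pow_sub_expand (hA : ∀ b : A, (p : A) ∣ b ^ p - b) (F : A[T;T⁻¹]) :
    (p : A[T;T⁻¹]) ∣ F ^ p - expand p F := by
  have hp : p.Prime := Fact.out
  induction F using AddMonoidAlgebra.induction_linear with
  | zero => simp [hp.ne_zero]
  | add F F' hF hF' =>
    obtain ⟨s, hs⟩ := exists_add_pow_prime_eq hp F F'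
    rw [hs, map_add, show F ^ p + F' ^ p + p * F * F' * s - (expand p F + expand p F') =
      (F ^ p - expand p F) + (F' ^ p - expand p F') + p * (F * F' * s) by ring]
    exact dvd_add (dvd_add hF hF') (dvd_mul_right _ _)
  | single m b =>
    rw [AddMonoidAlgebra.single_pow, expand_single, nsmul_eq_mul, ← AddMonoidAlgebra.single_sub,
      single_eq_C_mul_T, ← map_natCast C]
    exact (map_dvd C (hA b)).mul_right _

theorem pow_prime_pow_succ_eq_expand (k : ℕ) (F : (ZMod (p ^ (k + 1)))[T;T⁻¹]) :
    F ^ p ^ (k + 1) = expand p (F ^ p ^ k) := by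
  have hdvd :=
    dvd_sub_pow_of_dvd_sub (natCast_dvd_pow_sub_expand (ZMod.natCast_dvd_pow_sub_self p) F) k
  have hpk : (p : (ZMod (p ^ (k + 1)))[T;T⁻¹]) ^ (k + 1) = 0 := by
    rw [← Nat.cast_pow, ← map_natCast C, ZMod.natCast_self, map_zero]
  rwa [hpk, zero_dvd_iff, sub_eq_zero, ← pow_mul, ← pow_succ', ← map_pow] at hdvd

end LaurentPolynomial

theorem stmt_7_general (p : ℕ) [Fact p.Prime] [NeZero p] (α : ℕ)
    (r : ℤ) (F G : LaurentPolynomial (ZMod (p ^ α))) :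
    cartier p r (G * F ^ p ^ α) = cartier p r G * F ^ p ^ (α - 1) := by
  cases α with
  | zero =>
    have : Subsingleton (ZMod (p ^ 0)) := ZMod.subsingleton_iff.2 (pow_zero p)
    exact Subsingleton.elim _ _
  | succ k => rw [pow_prime_pow_succ_eq_expand, cartier_mul_expand, Nat.add_sub_cancel]

/-- `Λ_r (G · F^{p^α}) = Λ_r (G) · F^{p^{α-1}}` for Laurent polynomials over `ℤ/p^αℤ`. -/
theorem stmt_7 (p : ℕ) [Fact p.Prime] [NeZero p] (α : ℕ) (hα : 1 ≤ α)
    (r : ℤ) (hr0 : 0 ≤ r) (hr : r < p)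
    (F G : LaurentPolynomial (ZMod (p ^ α))) :
    cartier p r (G * F ^ p ^ α) = cartier p r G * F ^ p ^ (α - 1) :=
  stmt_7_general p α r F G
end

section
/- Let D = {0, 1, …, p − 1} ⊆ ℤ/p^αℤ and let Q ∈ (ℤ/p^αℤ)[x, y, y⁻¹] be a Laurent polynomial whose constant term is a unit. If T₀, …, T_{α−1} and U₀, …, U_{α−1} are Laurent polynomials with all coefficients in D and (Σ_{k=0}^{α−1} T_k p^k Q^{−k}) Q^{p^{α−1}−1} = (Σ_{k=0}^{α−1} U_k p^k Q^{−k}) Q^{p^{α−1}−1} as Laurent series over ℤ/p^αℤ, then T_k = U_k for all k. (Uniqueness of base-p/Q representations.) -/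
/-!
Put `D_k = T_k - U_k` and `E = p^(α-1) - 1`, so that `Σ_k D_k p^k Q^(E-k) = 0`, and argue by
strong induction on `k`. If `D_j = 0` for `j < k`, multiplying by `p^(α-1-k)` kills every term
with `j > k` (as `p^α = 0`), leaving `p^(α-1) D_k Q^(E-k) = 0`; hence `D_k Q^(E-k)` vanishes
modulo `p`. The ring `𝔽_p[y, y⁻¹][x]` is a domain in which `Q` stays nonzero, because its
constant term is a unit, so `T_k ≡ U_k` modulo `p`; as both have digits in `{0, …, p-1}`,
they are equal.
-/

open Polynomial LaurentPolynomial

section MapLaurent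

variable {R S : Type*} [CommRing R] [CommRing S]

noncomputable def mapLaurent (f : R →+* S) : R[T;T⁻¹][X] →+* S[T;T⁻¹][X] :=
  Polynomial.mapRingHom (AddMonoidAlgebra.mapRingHom ℤ f)

@[simp]
theorem coeff_coeff_mapLaurent (f : R →+* S) (W : R[T;T⁻¹][X]) (i : ℕ) (j : ℤ) :
    ((mapLaurent f W).coeff i).coeff j = f ((W.coeff i).coeff j) := by
  simp [mapLaurent]

theorem mapLaurent_eq_zero_of_nsmul_eq_zero (f : R →+* S) {n : ℕ}
    (hf : ∀ z : R, n • z = 0 → f z = 0) {W : R[T;T⁻¹][X]} (hW : n • W = 0) :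
    mapLaurent f W = 0 := by
  ext i j
  rw [coeff_coeff_mapLaurent]
  apply hf
  simpa [-nsmul_eq_mul] using congrArg (fun V : R[T;T⁻¹][X] => (V.coeff i).coeff j) hW

end MapLaurent

theorem pow_pred_mul_eq_zero_of_sum_eq_zero {S : Type*} [CommRing S] {α : ℕ} {π : S}
    (hπ : π ^ α = 0) {D c : Fin α → S} (h : ∑ j, D j * π ^ (j : ℕ) * c j = 0) (k : Fin α)
    (hD : ∀ j < k, D j = 0) : π ^ (α - 1) * (D k * c k) = 0 := by
  have hk : π ^ (α - 1) = π ^ (α - 1 - k) * π ^ (k : ℕ) := by rw [← pow_add]; congr 1; omega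
  calc π ^ (α - 1) * (D k * c k) = ∑ j, π ^ (α - 1 - k) * (D j * π ^ (j : ℕ) * c j) := by
        rw [Finset.sum_eq_single k]
        · rw [hk]; ring
        · intro j _ hjk
          rcases lt_or_gt_of_ne hjk with hj | hj
          · simp [hD j hj]
          · have hjα : α ≤ α - 1 - k + j := by have := Fin.lt_def.mp hj; omega
            calc π ^ (α - 1 - k) * (D j * π ^ (j : ℕ) * c j)
                  = D j * c j * π ^ (α - 1 - k + j) := by ring
              _ = 0 := by rw [pow_eq_zero_of_le hjα hπ, mul_zero]
        · simp
    _ = 0 := by rw [← Finset.mul_sum, h, mul_zero]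

namespace ZMod

variable {p α : ℕ}

theorem castHom_eq_zero_of_pow_pred_nsmul_eq_zero [NeZero p] (hα : α ≠ 0) {z : ZMod (p ^ α)}
    (hz : p ^ (α - 1) • z = 0) : castHom (dvd_pow_self p hα) (ZMod p) z = 0 := by
  have : NeZero (p ^ α) := ⟨pow_ne_zero _ (NeZero.ne p)⟩
  rw [← natCast_zmod_val z, nsmul_eq_mul, ← Nat.cast_mul, natCast_eq_zero_iff] at hz
  rw [castHom_apply, cast_eq_val, natCast_eq_zero_iff,
    ← Nat.mul_dvd_mul_iff_left (pow_pos (Nat.pos_of_neZero p) (α - 1)), ← pow_succ,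
    Nat.sub_add_cancel (Nat.one_le_iff_ne_zero.mpr hα)]
  exact hz

theorem eq_of_castHom_natCast_eq (hα : α ≠ 0) {m m' : ℕ} (hm : m < p) (hm' : m' < p)
    (h : castHom (dvd_pow_self p hα) (ZMod p) m = castHom (dvd_pow_self p hα) (ZMod p) m') :
    m = m' := by
  rwa [map_natCast, map_natCast, natCast_eq_natCast_iff', Nat.mod_eq_of_lt hm,
    Nat.mod_eq_of_lt hm'] at h

end ZMod

theorem eq_of_mapLaurent_castHom_eq {p α : ℕ} (hα : α ≠ 0) {A B : (ZMod (p ^ α))[T;T⁻¹][X]}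
    (hA : ∀ (i : ℕ) (j : ℤ), ∃ m : ℕ, m < p ∧ (A.coeff i).coeff j = (m : ZMod (p ^ α)))
    (hB : ∀ (i : ℕ) (j : ℤ), ∃ m : ℕ, m < p ∧ (B.coeff i).coeff j = (m : ZMod (p ^ α)))
    (h : mapLaurent (ZMod.castHom (dvd_pow_self p hα) (ZMod p)) A =
      mapLaurent (ZMod.castHom (dvd_pow_self p hα) (ZMod p)) B) : A = B := by
  ext i j
  obtain ⟨m, hm, hAm⟩ := hA i j
  obtain ⟨m', hm', hBm⟩ := hB i j
  have hij := congrArg (fun V => (V.coeff i).coeff j) h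
  simp only [coeff_coeff_mapLaurent, hAm, hBm] at hij
  rw [hAm, hBm, ZMod.eq_of_castHom_natCast_eq hα hm hm' hij]

/-- Uniqueness of base-`p/Q` representations.  Model `(ℤ/p^αℤ)[x, y, y⁻¹]` as
polynomials in `x` whose coefficients are Laurent polynomials in `y`.  Let `Q` have
unit constant term, and let `T₀, …, T_{α-1}` and `U₀, …, U_{α-1}` be Laurent
polynomials all of whose coefficients lie in `D = {0, 1, …, p-1}`.  If
`(Σ_k T_k p^k Q^{-k}) Q^{p^{α-1}-1} = (Σ_k U_k p^k Q^{-k}) Q^{p^{α-1}-1}`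
(equivalently, after clearing denominators,
`Σ_k T_k p^k Q^{p^{α-1}-1-k} = Σ_k U_k p^k Q^{p^{α-1}-1-k}`), then `T_k = U_k`
for all `k`. -/
theorem stmt_11 (p : ℕ) [Fact p.Prime] (α : ℕ) (hα : 1 ≤ α)
    (Q : Polynomial (LaurentPolynomial (ZMod (p ^ α))))
    (hQ : IsUnit ((Q.coeff 0).coeff 0))
    (T U : Fin α → Polynomial (LaurentPolynomial (ZMod (p ^ α))))
    (hT : ∀ (k : Fin α) (i : ℕ) (j : ℤ), ∃ m : ℕ, m < p ∧
      ((T k).coeff i).coeff j = (m : ZMod (p ^ α)))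
    (hU : ∀ (k : Fin α) (i : ℕ) (j : ℤ), ∃ m : ℕ, m < p ∧
      ((U k).coeff i).coeff j = (m : ZMod (p ^ α)))
    (heq : ∑ k : Fin α,
        T k * (p : Polynomial (LaurentPolynomial (ZMod (p ^ α)))) ^ (k : ℕ) *
          Q ^ (p ^ (α - 1) - 1 - (k : ℕ)) =
      ∑ k : Fin α,
        U k * (p : Polynomial (LaurentPolynomial (ZMod (p ^ α)))) ^ (k : ℕ) *
          Q ^ (p ^ (α - 1) - 1 - (k : ℕ))) :
    ∀ k, T k = U k := by
  have hα0 : α ≠ 0 := by omega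
  set φ := mapLaurent (ZMod.castHom (dvd_pow_self p hα0) (ZMod p))
  have hp : (p : (ZMod (p ^ α))[T;T⁻¹][X]) ^ α = 0 := by
    rw [← Nat.cast_pow, ← map_natCast (algebraMap (ZMod (p ^ α)) _), ZMod.natCast_self, map_zero]
  have hsum : ∑ k : Fin α, (T k - U k) * (p : (ZMod (p ^ α))[T;T⁻¹][X]) ^ (k : ℕ) *
      Q ^ (p ^ (α - 1) - 1 - (k : ℕ)) = 0 := by
    rw [← sub_eq_zero, ← Finset.sum_sub_distrib] at heq
    simpa only [sub_mul] using heq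
  have hφQ : φ Q ≠ 0 := fun h0 => by
    have h00 := congrArg (fun V => (V.coeff 0).coeff 0) h0
    simp only [φ, coeff_coeff_mapLaurent] at h00
    exact (hQ.map _).ne_zero h00
  intro k
  induction k using WellFoundedLT.induction with
  | ind k ih =>
    have hW := pow_pred_mul_eq_zero_of_sum_eq_zero hp hsum k fun j hj => sub_eq_zero.mpr (ih j hj)
    rw [← Nat.cast_pow, ← nsmul_eq_mul] at hW
    have hφW := mapLaurent_eq_zero_of_nsmul_eq_zero _
      (fun z => ZMod.castHom_eq_zero_of_pow_pred_nsmul_eq_zero hα0) hW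
    rw [map_mul, map_pow, mul_eq_zero, map_sub, sub_eq_zero] at hφW
    exact eq_of_mapLaurent_castHom_eq hα0 (hT k) (hU k) (hφW.resolve_right (pow_ne_zero _ hφQ))
end

section
/- With the same setup, every element of the form (Σ_{k=0}^{α−1} T'_k (p/Q)^k) Q^{p^{α−1}−1}, where the T'_k are arbitrary Laurent polynomials over ℤ/p^αℤ, has a base-p/Q representation, i.e., can be rewritten with digits having coefficients in D = {0, …, p − 1} by performing carries. Consequently the set of Laurent polynomials admitting a base-p/Q representation is closed under addition. -/
/-!
Carrying works in any commutative ring `S` with an element `c` such that every `a : S` splits as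
`a = r + c * u` with `r` a digit. Normalising the digits from the lowest one up, `r` stays in
place and `u * Q` is added to the next digit; as `Q * c ^ (k + 1) * Q ^ (N - k - 1) =
c * c ^ k * Q ^ (N - k)`, the value does not change, and what is carried out of the top digit is a
multiple of `c ^ α = p ^ α = 0`. Closure under addition follows by normalising the digitwise sum.
-/

section Digits

variable {S : Type*} [CommRing S]

/-- `(∑ k, T k * (c / Q) ^ k) * Q ^ N`, written without division; it is meant for `α ≤ N + 1`, where
`N - k` does not truncate. -/
def digitsValue {α : ℕ} (c Q : S) (N : ℕ) (T : Fin α → S) : S :=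
  ∑ k, T k * c ^ (k : ℕ) * Q ^ (N - k)

lemma digitsValue_add {α : ℕ} (c Q : S) (N : ℕ) (T U : Fin α → S) :
    digitsValue c Q N (T + U) = digitsValue c Q N T + digitsValue c Q N U := by
  simp only [digitsValue, Pi.add_apply, add_mul, Finset.sum_add_distrib]

lemma digitsValue_succ {α : ℕ} (c Q : S) (N : ℕ) (T : Fin (α + 1) → S) :
    digitsValue c Q (N + 1) T = T 0 * Q ^ (N + 1) + c * digitsValue c Q N (Fin.tail T) := by
  simp only [digitsValue, Fin.sum_univ_succ, Finset.mul_sum, Fin.val_zero, Fin.val_succ,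
    Fin.tail, Nat.add_sub_add_right, pow_zero, mul_one, Nat.sub_zero]
  congr 1
  exact Finset.sum_congr rfl fun k _ => by ring

/-- `v` is a carry into the lowest digit, i.e. `v * Q` added to `T' 0`. -/
theorem exists_digits_dvd_sub {Dig : S → Prop} {c : S} (Q : S)
    (hdec : ∀ a, ∃ r u, Dig r ∧ a = r + c * u) {α : ℕ} :
    ∀ {N : ℕ}, α ≤ N + 1 → ∀ (T' : Fin α → S) (v : S), ∃ T : Fin α → S, (∀ k, Dig (T k)) ∧
      c ^ α ∣ v * Q ^ (N + 1) + digitsValue c Q N T' - digitsValue c Q N T := by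
  induction α with
  | zero => exact fun _ T' _ => ⟨T', fun k => k.elim0, by simp⟩
  | succ α ih =>
    intro N hN T' v
    obtain ⟨r, u, hr, hru⟩ := hdec (T' 0 + v * Q)
    cases N with
    | zero =>
      obtain rfl : α = 0 := by omega
      refine ⟨fun _ => r, fun _ => hr, u, ?_⟩
      simp only [digitsValue, Fin.sum_univ_succ, Finset.univ_eq_empty, Finset.sum_empty,
        Fin.val_zero, pow_zero, mul_one, add_zero, zero_add, pow_one]
      linear_combination hru
    | succ N =>
      obtain ⟨T₀, hT₀, d, hd⟩ := ih (N := N) (by omega) (Fin.tail T') u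
      refine ⟨Fin.cons r T₀, Fin.cases hr hT₀, d, ?_⟩
      rw [digitsValue_succ, digitsValue_succ, Fin.cons_zero, Fin.tail_cons]
      linear_combination Q ^ (N + 1) * hru + c * hd

theorem exists_digits_eq {Dig : S → Prop} {c : S} (Q : S)
    (hdec : ∀ a, ∃ r u, Dig r ∧ a = r + c * u) {α N : ℕ} (hc : c ^ α = 0) (hN : α ≤ N + 1)
    (T' : Fin α → S) :
    ∃ T : Fin α → S, (∀ k, Dig (T k)) ∧ digitsValue c Q N T = digitsValue c Q N T' := by
  obtain ⟨T, hT, hdvd⟩ := exists_digits_dvd_sub Q hdec hN T' 0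
  refine ⟨T, hT, ?_⟩
  rw [hc, zero_dvd_iff, zero_mul, zero_add, sub_eq_zero] at hdvd
  exact hdvd.symm

end Digits

section DigitDecomposition

variable {A : Type*} {Dig : A → Prop} {c : ℕ}

theorem Finsupp.exists_digits_add_nsmul {ι : Type*} [AddCommMonoid A] (h0 : Dig 0)
    (hdec : ∀ a : A, ∃ r u, Dig r ∧ a = r + c • u) (f : ι →₀ A) :
    ∃ g h : ι →₀ A, (∀ i, Dig (g i)) ∧ f = g + c • h := by
  classical
  choose r u hr hru using hdec
  let r' : A → A := fun a => if a = 0 then 0 else r a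
  let u' : A → A := fun a => if a = 0 then 0 else u a
  refine ⟨f.mapRange r' (if_pos rfl), f.mapRange u' (if_pos rfl), fun i => ?_, ?_⟩
  · by_cases hi : f i = 0 <;> simp [r', hi, h0, hr]
  · ext i
    by_cases hi : f i = 0 <;> simp [r', u', hi, ← hru]

theorem AddMonoidAlgebra.exists_digits_add_nsmul {G : Type*} [Semiring A] (h0 : Dig 0)
    (hdec : ∀ a : A, ∃ r u, Dig r ∧ a = r + c • u) (f : AddMonoidAlgebra A G) :
    ∃ g h : AddMonoidAlgebra A G, (∀ i, Dig (g.coeff i)) ∧ f = g + c • h := by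
  obtain ⟨g, h, hg, hf⟩ := Finsupp.exists_digits_add_nsmul h0 hdec f.coeff
  exact ⟨.ofCoeff g, .ofCoeff h, hg, coeff_injective hf⟩

theorem Polynomial.exists_digits_add_nsmul [Semiring A] (h0 : Dig 0)
    (hdec : ∀ a : A, ∃ r u, Dig r ∧ a = r + c • u) (P : Polynomial A) :
    ∃ G H : Polynomial A, (∀ i, Dig (G.coeff i)) ∧ P = G + c • H := by
  obtain ⟨g, h, hg, hP⟩ := AddMonoidAlgebra.exists_digits_add_nsmul h0 hdec P.toFinsupp
  refine ⟨⟨g⟩, ⟨h⟩, hg, ?_⟩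
  rw [← ofFinsupp_smul, ← ofFinsupp_add, ← hP]

end DigitDecomposition

theorem ZMod.exists_digit_add_nsmul {n p : ℕ} [NeZero n] (hp : 0 < p) (a : ZMod n) :
    ∃ r u : ZMod n, (∃ m : ℕ, m < p ∧ r = m) ∧ a = r + p • u := by
  refine ⟨_, (a.val / p : ℕ), ⟨a.val % p, Nat.mod_lt _ hp, rfl⟩, ?_⟩
  conv_lhs => rw [← ZMod.natCast_zmod_val a, ← Nat.mod_add_div a.val p]
  push_cast
  rw [nsmul_eq_mul]

theorem exists_digits_add_natCast_mul {n p : ℕ} [NeZero n] (hp : 0 < p)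
    (P : Polynomial (LaurentPolynomial (ZMod n))) :
    ∃ R U : Polynomial (LaurentPolynomial (ZMod n)),
      (∀ (i : ℕ) (j : ℤ), ∃ m : ℕ, m < p ∧ (R.coeff i).coeff j = m) ∧ P = R + p * U := by
  have hdigit0 : ∃ m : ℕ, m < p ∧ (0 : ZMod n) = m := ⟨0, hp, Nat.cast_zero.symm⟩
  obtain ⟨R, U, hR, hP⟩ := Polynomial.exists_digits_add_nsmul (fun _ => hdigit0)
    (AddMonoidAlgebra.exists_digits_add_nsmul hdigit0 (ZMod.exists_digit_add_nsmul hp)) P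
  exact ⟨R, U, hR, by rwa [← nsmul_eq_mul]⟩

theorem stmt_12_general (p : ℕ) [Fact p.Prime] (α : ℕ)
    (Q : Polynomial (LaurentPolynomial (ZMod (p ^ α)))) :
    (∀ T' : Fin α → Polynomial (LaurentPolynomial (ZMod (p ^ α))),
      ∃ T : Fin α → Polynomial (LaurentPolynomial (ZMod (p ^ α))),
        (∀ (k : Fin α) (i : ℕ) (j : ℤ), ∃ m : ℕ, m < p ∧
          ((T k).coeff i).coeff j = (m : ZMod (p ^ α))) ∧
        ∑ k : Fin α,
            T k * (p : Polynomial (LaurentPolynomial (ZMod (p ^ α)))) ^ (k : ℕ) *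
              Q ^ (p ^ (α - 1) - 1 - (k : ℕ)) =
          ∑ k : Fin α,
            T' k * (p : Polynomial (LaurentPolynomial (ZMod (p ^ α)))) ^ (k : ℕ) *
              Q ^ (p ^ (α - 1) - 1 - (k : ℕ))) ∧
    (∀ T U : Fin α → Polynomial (LaurentPolynomial (ZMod (p ^ α))),
      (∀ (k : Fin α) (i : ℕ) (j : ℤ), ∃ m : ℕ, m < p ∧
        ((T k).coeff i).coeff j = (m : ZMod (p ^ α))) →
      (∀ (k : Fin α) (i : ℕ) (j : ℤ), ∃ m : ℕ, m < p ∧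
        ((U k).coeff i).coeff j = (m : ZMod (p ^ α))) →
      ∃ V : Fin α → Polynomial (LaurentPolynomial (ZMod (p ^ α))),
        (∀ (k : Fin α) (i : ℕ) (j : ℤ), ∃ m : ℕ, m < p ∧
          ((V k).coeff i).coeff j = (m : ZMod (p ^ α))) ∧
        ∑ k : Fin α,
            V k * (p : Polynomial (LaurentPolynomial (ZMod (p ^ α)))) ^ (k : ℕ) *
              Q ^ (p ^ (α - 1) - 1 - (k : ℕ)) =
          (∑ k : Fin α,
            T k * (p : Polynomial (LaurentPolynomial (ZMod (p ^ α)))) ^ (k : ℕ) *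
              Q ^ (p ^ (α - 1) - 1 - (k : ℕ))) +
          ∑ k : Fin α,
            U k * (p : Polynomial (LaurentPolynomial (ZMod (p ^ α)))) ^ (k : ℕ) *
              Q ^ (p ^ (α - 1) - 1 - (k : ℕ))) := by
  have hp := (Fact.out : p.Prime)
  have : NeZero (p ^ α) := ⟨pow_ne_zero α hp.ne_zero⟩
  have hdec := exists_digits_add_natCast_mul (n := p ^ α) hp.pos
  have hc : ((p : Polynomial (LaurentPolynomial (ZMod (p ^ α))))) ^ α = 0 := by
    rw [← Nat.cast_pow, ← map_natCast (algebraMap (ZMod (p ^ α)) _), ZMod.natCast_self, map_zero]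
  have hN : α ≤ p ^ (α - 1) - 1 + 1 := by
    have := Nat.lt_two_pow_self (n := α - 1)
    have := Nat.pow_le_pow_left hp.two_le (α - 1)
    omega
  refine ⟨exists_digits_eq Q hdec hc hN, fun T U _ _ => ?_⟩
  obtain ⟨V, hV, hVTU⟩ := exists_digits_eq Q hdec hc hN (T + U)
  exact ⟨V, hV, hVTU.trans (digitsValue_add _ _ _ T U)⟩

/-- Existence of base-`p/Q` representations (carrying).  Model `(ℤ/p^αℤ)[x, y, y⁻¹]`
as polynomials in `x` with coefficients Laurent polynomials in `y`, and let `Q` have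
unit constant term.  Every element of the form `(Σ_k T'_k (p/Q)^k) Q^{p^{α-1}-1}`
with arbitrary digits `T'_k` has a base-`p/Q` representation with digits whose
coefficients all lie in `D = {0, …, p-1}`; consequently, the set of elements
admitting a base-`p/Q` representation is closed under addition. -/
theorem stmt_12 (p : ℕ) [Fact p.Prime] (α : ℕ) (hα : 1 ≤ α)
    (Q : Polynomial (LaurentPolynomial (ZMod (p ^ α))))
    (hQ : IsUnit ((Q.coeff 0).coeff 0)) :
    (∀ T' : Fin α → Polynomial (LaurentPolynomial (ZMod (p ^ α))),
      ∃ T : Fin α → Polynomial (LaurentPolynomial (ZMod (p ^ α))),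
        (∀ (k : Fin α) (i : ℕ) (j : ℤ), ∃ m : ℕ, m < p ∧
          ((T k).coeff i).coeff j = (m : ZMod (p ^ α))) ∧
        ∑ k : Fin α,
            T k * (p : Polynomial (LaurentPolynomial (ZMod (p ^ α)))) ^ (k : ℕ) *
              Q ^ (p ^ (α - 1) - 1 - (k : ℕ)) =
          ∑ k : Fin α,
            T' k * (p : Polynomial (LaurentPolynomial (ZMod (p ^ α)))) ^ (k : ℕ) *
              Q ^ (p ^ (α - 1) - 1 - (k : ℕ))) ∧
    (∀ T U : Fin α → Polynomial (LaurentPolynomial (ZMod (p ^ α))),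
      (∀ (k : Fin α) (i : ℕ) (j : ℤ), ∃ m : ℕ, m < p ∧
        ((T k).coeff i).coeff j = (m : ZMod (p ^ α))) →
      (∀ (k : Fin α) (i : ℕ) (j : ℤ), ∃ m : ℕ, m < p ∧
        ((U k).coeff i).coeff j = (m : ZMod (p ^ α))) →
      ∃ V : Fin α → Polynomial (LaurentPolynomial (ZMod (p ^ α))),
        (∀ (k : Fin α) (i : ℕ) (j : ℤ), ∃ m : ℕ, m < p ∧
          ((V k).coeff i).coeff j = (m : ZMod (p ^ α))) ∧
        ∑ k : Fin α,
            V k * (p : Polynomial (LaurentPolynomial (ZMod (p ^ α)))) ^ (k : ℕ) *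
              Q ^ (p ^ (α - 1) - 1 - (k : ℕ)) =
          (∑ k : Fin α,
            T k * (p : Polynomial (LaurentPolynomial (ZMod (p ^ α)))) ^ (k : ℕ) *
              Q ^ (p ^ (α - 1) - 1 - (k : ℕ))) +
          ∑ k : Fin α,
            U k * (p : Polynomial (LaurentPolynomial (ZMod (p ^ α)))) ^ (k : ℕ) *
              Q ^ (p ^ (α - 1) - 1 - (k : ℕ))) :=
  stmt_12_general p α Q
end

section
/- Let R be a nonzero element of z⁻¹·(ℤ/p^αℤ)[z] (a Laurent polynomial with min-degree ≥ −1) such that R mod p has min-degree e₀ ∈ {−1, 0} and degree r ≥ 1. Then the coefficient sequence of the Laurent series 1/R^{p^{α−1}} over ℤ/p^αℤ is purely periodic, with period length dividing p^{2(α−1)}·m, where m is the period length of the coefficient sequence of 1/(R mod p) over 𝔽_p. -/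
/-!
Modulo `p`, periodicity of `G = z / T̄` with period `m` means `q̄ T̄ = z (1 - z^m)` for a
polynomial `q̄` of degree `< m`. Lift `q̄` to `Q` over `ℤ/p^αℤ`; then `TQ ≡ z (z^m - 1)`
modulo `p`, and raising to the power `N = p^(α-1)` turns this congruence into an equality,
so `F = z^N / T^N = Q^N / (z^m - 1)^N`. Finally `(y - 1)^N ∣ y^(p^(2(α-1))) - 1` over
`ℤ/p^αℤ`, because `p^α` divides the binomial coefficients `C(p^(2(α-1)), k)` for
`0 < k < N`; with `y = z^m` this exhibits `F (1 - z^(p^(2(α-1)) m))` as a polynomial of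
degree `< p^(2(α-1)) m`.
-/

theorem Nat.Prime.pow_dvd_choose_prime_pow {p n j k : ℕ} (hp : p.Prime) (hjn : j ≤ n)
    (hk0 : k ≠ 0) (hkj : k < p ^ j) : p ^ (n - j + 1) ∣ (p ^ n).choose k := by
  have hv : multiplicity p k < j := by
    have := Nat.le_of_dvd (Nat.pos_of_ne_zero hk0) (pow_multiplicity_dvd p k)
    exact (Nat.pow_lt_pow_iff_right hp.one_lt).mp (this.trans_lt hkj)
  have hkn : k ≤ p ^ n := hkj.le.trans (Nat.pow_le_pow_right hp.pos hjn)
  refine pow_dvd_of_le_emultiplicity ?_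
  rw [hp.emultiplicity_choose_prime_pow hkn hk0]
  exact_mod_cast (by omega : n - j + 1 ≤ n - multiplicity p k)

theorem sub_one_pow_dvd_pow_sub_one {A : Type*} [CommRing A] {N S : ℕ}
    (hchoose : ∀ k, k ≠ 0 → k < N → (S.choose k : A) = 0) (y : A) :
    (y - 1) ^ N ∣ y ^ S - 1 := by
  have hexp : y ^ S - 1 = ∑ k ∈ Finset.range S, (y - 1) ^ (k + 1) * (S.choose (k + 1) : A) := by
    conv_lhs => rw [← sub_add_cancel y 1, add_pow]
    simp [Finset.sum_range_succ']
  rw [hexp]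
  refine Finset.dvd_sum fun k _ => ?_
  by_cases hk : k + 1 < N
  · rw [hchoose (k + 1) k.succ_ne_zero hk, mul_zero]
    exact dvd_zero _
  · exact (pow_dvd_pow _ (by omega)).mul_right _

namespace ZMod

theorem natCast_choose_prime_pow_eq_zero {p α k : ℕ} (hp : p.Prime) (hk0 : k ≠ 0)
    (hk : k < p ^ (α - 1)) : ((p ^ (2 * (α - 1))).choose k : ZMod (p ^ α)) = 0 := by
  rw [natCast_eq_zero_iff]
  exact (pow_dvd_pow p (by omega)).trans (hp.pow_dvd_choose_prime_pow (by omega) hk0 hk)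

theorem natCast_dvd_of_castHom_eq_zero {n q : ℕ} (hq : q ∣ n) {a : ZMod n}
    (ha : castHom hq (ZMod q) a = 0) : (q : ZMod n) ∣ a := by
  rw [castHom_apply, ← intCast_cast, intCast_zmod_eq_zero_iff_dvd] at ha
  obtain ⟨c, hc⟩ := ha
  exact ⟨c, by rw [← intCast_zmod_cast a, hc]; push_cast; rfl⟩

end ZMod

namespace Polynomial

theorem natCast_dvd_sub_of_map_castHom_eq {n q : ℕ} (hq : q ∣ n) {f g : (ZMod n)[X]}
    (h : f.map (ZMod.castHom hq (ZMod q)) = g.map (ZMod.castHom hq (ZMod q))) :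
    (q : (ZMod n)[X]) ∣ f - g := by
  rw [← C_eq_natCast, C_dvd_iff_dvd_coeff]
  refine fun i => ZMod.natCast_dvd_of_castHom_eq_zero hq ?_
  rw [coeff_sub, map_sub, ← coeff_map, ← coeff_map, h, sub_self]

theorem pow_eq_pow_of_map_castHom_eq {p α : ℕ} (hα : α ≠ 0) {f g : (ZMod (p ^ α))[X]}
    (h : f.map (ZMod.castHom (dvd_pow_self p hα) (ZMod p)) =
      g.map (ZMod.castHom (dvd_pow_self p hα) (ZMod p))) :
    f ^ p ^ (α - 1) = g ^ p ^ (α - 1) := by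
  have hdvd := dvd_sub_pow_of_dvd_sub (natCast_dvd_sub_of_map_castHom_eq _ h) (α - 1)
  have hchar : (p : (ZMod (p ^ α))[X]) ^ (α - 1 + 1) = 0 := by
    rw [Nat.sub_add_cancel (Nat.one_le_iff_ne_zero.mpr hα), ← Nat.cast_pow,
      CharP.cast_eq_zero]
  rwa [hchar, zero_dvd_iff, sub_eq_zero] at hdvd

theorem exists_X_pow_sub_one_pow_mul_eq {A : Type*} [CommRing A] {N S : ℕ}
    (hchoose : ∀ k, k ≠ 0 → k < N → (S.choose k : A) = 0) {m : ℕ} (hm : 0 < m) :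
    ∃ D : A[X], (X ^ m - 1) ^ N * D = X ^ (S * m) - 1 ∧ D.natDegree ≤ (S - N) * m := by
  nontriviality A
  have hX : (X ^ m - 1 : A[X]).Monic := by simpa using monic_X_pow_sub_C (1 : A) hm.ne'
  have hmonic := hX.pow N
  obtain ⟨D, hD⟩ := sub_one_pow_dvd_pow_sub_one (A := A[X])
    (fun k hk0 hk => by rw [← map_natCast C, hchoose k hk0 hk, map_zero]) (X ^ m)
  rw [← pow_mul, mul_comm] at hD
  refine ⟨D, hD.symm, le_of_eq ?_⟩
  rw [← mul_divByMonic_cancel_left D hmonic, ← hD, natDegree_divByMonic _ hmonic,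
    hX.natDegree_pow, ← C_1, natDegree_X_pow_sub_C, natDegree_X_pow_sub_C, Nat.sub_mul]

end Polynomial

namespace PowerSeries

variable {R : Type*} [CommRing R]

theorem mul_one_sub_X_pow_eq_trunc_s14 {f : R⟦X⟧} {k : ℕ}
    (hf : Function.Periodic (fun n => coeff n f) k) : f * (1 - X ^ k) = (trunc k f : R⟦X⟧) := by
  ext n
  rw [mul_sub, mul_one, map_sub, coeff_mul_X_pow', Polynomial.coeff_coe, coeff_trunc]
  split_ifs with hkn hnk hnk
  · omega
  · have := hf (n - k)
    simp only [Nat.sub_add_cancel hkn] at this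
    rw [this, sub_self]
  · rw [sub_zero]
  · omega

theorem trunc_mul_eq_X_mul_one_sub_X_pow {f : R⟦X⟧} {P : Polynomial R} {k : ℕ}
    (hf : Function.Periodic (fun n => coeff n f) k) (hfP : f * (P : R⟦X⟧) = X) :
    trunc k f * P = Polynomial.X * (1 - Polynomial.X ^ k) := by
  apply Polynomial.coe_inj.mp
  push_cast
  rw [← mul_one_sub_X_pow_eq_trunc_s14 hf, mul_right_comm, hfP]

theorem periodic_coeff_of_mul_one_sub_X_pow_eq_s14 {f : R⟦X⟧} {k : ℕ} {q : Polynomial R}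
    (hq : q.natDegree < k) (h : f * (1 - X ^ k) = (q : R⟦X⟧)) :
    Function.Periodic (fun n => coeff n f) k := by
  intro n
  have := congrArg (coeff (n + k)) h
  rwa [mul_sub, mul_one, map_sub, coeff_mul_X_pow, Polynomial.coeff_coe,
    Polynomial.coeff_eq_zero_of_natDegree_lt (by omega), sub_eq_zero] at this

theorem periodic_coeff_of_mul_X_pow_sub_one_pow_eq {N S m : ℕ}
    (hchoose : ∀ k, k ≠ 0 → k < N → (S.choose k : R) = 0) (hm : 0 < m) (hNS : N ≤ S)
    {f : R⟦X⟧} {P : Polynomial R} (hP : P.natDegree < N * m)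
    (hf : f * (X ^ m - 1) ^ N = (P : R⟦X⟧)) :
    Function.Periodic (fun n => coeff n f) (S * m) := by
  obtain ⟨D, hD, hDdeg⟩ := Polynomial.exists_X_pow_sub_one_pow_mul_eq hchoose hm
  refine periodic_coeff_of_mul_one_sub_X_pow_eq_s14 (q := -(P * D)) ?_ ?_
  · calc (-(P * D)).natDegree ≤ P.natDegree + D.natDegree := by
          rw [Polynomial.natDegree_neg]
          exact Polynomial.natDegree_mul_le
      _ < N * m + (S - N) * m := Nat.add_lt_add_of_lt_of_le hP hDdeg
      _ = S * m := by rw [← Nat.add_mul, Nat.add_sub_cancel' hNS]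
  · have hD' := congrArg (fun g : Polynomial R => (g : R⟦X⟧)) hD
    push_cast at hD' ⊢
    rw [← hf, ← neg_sub (X ^ (S * m)), ← hD']
    ring

theorem mul_eq_of_mul_eq_X_pow {f a b q : R⟦X⟧} {N : ℕ} (hf : f * a = X ^ N)
    (ha : a * q = X ^ N * b) : f * b = q :=
  X_pow_mul_cancel <| calc
    X ^ N * (f * b) = f * (X ^ N * b) := by ring
    _ = f * a * q := by rw [← ha, mul_assoc]
    _ = X ^ N * q := by rw [hf]

end PowerSeries

/-- Let `R = T/z` be a nonzero element of `z⁻¹·(ℤ/p^αℤ)[z]` (here `T ∈ (ℤ/p^αℤ)[z]`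
represents `z·R`) such that `R mod p` has min-degree `e₀ ∈ {-1, 0}` (i.e. the
coefficient of `z⁰` or of `z¹` in `T` is a unit) and degree `r ≥ 1`
(i.e. `deg (T mod p) ≥ 2`).  Let `m` be the period length of the coefficient sequence
of `1/(R mod p) = z/(T mod p)` over `𝔽_p`, and let `F = 1/R^{p^{α-1}} =
z^{p^{α-1}}/T^{p^{α-1}}`.  Then the coefficient sequence of `F` is purely periodic
with period length dividing `p^{2(α-1)}·m`. -/
theorem stmt_14 (p : ℕ) [Fact p.Prime] (α : ℕ) (hα : 1 ≤ α)
    (T : Polynomial (ZMod (p ^ α)))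
    (G : PowerSeries (ZMod p))
    (hG : G * ((T.map (ZMod.castHom (dvd_pow_self p (by omega)) (ZMod p)) :
        Polynomial (ZMod p)) : PowerSeries (ZMod p)) = PowerSeries.X)
    (m : ℕ) (hm : 0 < m)
    (hper : ∀ n, PowerSeries.coeff (n + m) G = PowerSeries.coeff n G)
    (F : PowerSeries (ZMod (p ^ α)))
    (hF : F * ((T : PowerSeries (ZMod (p ^ α))) ^ p ^ (α - 1)) =
      PowerSeries.X ^ p ^ (α - 1)) :
    ∀ n, PowerSeries.coeff (n + p ^ (2 * (α - 1)) * m) F = PowerSeries.coeff n F := by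
  have hp : p.Prime := Fact.out
  have hα0 : α ≠ 0 := by omega
  set N := p ^ (α - 1)
  obtain ⟨Q, hQmap, hQdeg⟩ := Polynomial.exists_natDegree_eq_of_mem_lifts
    (Polynomial.mem_lifts_of_surjective (ZMod.castHom_surjective (dvd_pow_self p hα0))
      (-PowerSeries.trunc m G))
  have hTQ : (T * Q) ^ N = Polynomial.X ^ N * (Polynomial.X ^ m - 1) ^ N := by
    rw [← mul_pow]
    refine Polynomial.pow_eq_pow_of_map_castHom_eq hα0 ?_
    simp only [Polynomial.map_mul, Polynomial.map_sub, Polynomial.map_pow, Polynomial.map_X,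
      Polynomial.map_one, hQmap]
    linear_combination (-1 : Polynomial (ZMod p)) *
      PowerSeries.trunc_mul_eq_X_mul_one_sub_X_pow hper hG
  have hFQ : F * (PowerSeries.X ^ m - 1) ^ N = ((Q ^ N : Polynomial _) : PowerSeries _) := by
    refine PowerSeries.mul_eq_of_mul_eq_X_pow hF ?_
    have h := congrArg
      (fun f : Polynomial (ZMod (p ^ α)) => (f : PowerSeries (ZMod (p ^ α)))) hTQ
    push_cast at h ⊢
    rw [← h, mul_pow]
  have hQm : Q.natDegree < m := by
    have := PowerSeries.natDegree_trunc_lt G (m - 1)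
    rwa [Nat.sub_add_cancel hm, ← Polynomial.natDegree_neg, ← hQdeg] at this
  exact PowerSeries.periodic_coeff_of_mul_X_pow_sub_one_pow_eq
    (fun k hk0 hk => ZMod.natCast_choose_prime_pow_eq_zero hp hk0 hk) hm
    (Nat.pow_le_pow_right hp.pos (by omega))
    (Polynomial.natDegree_pow_le.trans_lt (Nat.mul_lt_mul_of_pos_left hQm (pow_pos hp.pos _)))
    hFQ
end

section
/- Let a(n) be the coefficient sequence of the power series 1/R over 𝔽_p where R ∈ 𝔽_p[z] has nonzero constant term and degree ≥ 1, and suppose R factors as c·R₁^{e₁}⋯R_k^{e_k} into monic irreducibles. Set L = lcm_i(p^{deg R_i} − 1) and e = max_i e_i. Then a(n) is purely periodic with period length dividing p^{⌈log_p e⌉}·L. -/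
/-!
Every irreducible `Rᵢ` with `Rᵢ(0) ≠ 0` divides `X^(p^deg Rᵢ - 1) - 1` (its roots lie in
`𝔽_{p^deg Rᵢ}^×`), hence divides `X^L - 1`. Raising to the `p^t`-th power with `p^t ≥ e`
gives `Rᵢ^eᵢ ∣ (X^L - 1)^(p^t) = X^(p^t L) - 1`, and since the `Rᵢ^eᵢ` are pairwise coprime,
`R ∣ X^N - 1` for `N = p^t L`. Then `(1/R)·(X^N - 1)` is a polynomial of degree `< N`, whose
vanishing coefficients beyond `N` say exactly that `a(n + N) = a(n)`.
-/

open Polynomial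

theorem Irreducible.dvd_X_pow_card_pow_natDegree_sub_one_sub_one {K : Type*} [Field K]
    [Finite K] {f : K[X]} (hf : Irreducible f) (hf0 : f.coeff 0 ≠ 0) :
    f ∣ X ^ (Nat.card K ^ f.natDegree - 1) - 1 := by
  have hcop : IsCoprime f X :=
    ((irreducible_X.coprime_iff_not_dvd).2 (by rwa [X_dvd_iff])).symm
  refine hcop.dvd_of_dvd_mul_left ?_
  rw [mul_sub, mul_one, ← pow_succ', Nat.sub_add_cancel (Nat.one_le_pow _ _ Nat.card_pos)]
  exact hf.natDegree_dvd_iff_dvd_X_pow_card_pow_sub_X.1 dvd_rfl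

theorem pow_dvd_pow_expChar_pow_mul_sub_one_of_dvd {A : Type*} [CommRing A] {p : ℕ}
    [ExpChar A p] {x y : A} {L m t : ℕ} (hy : y ∣ x ^ L - 1) (hm : m ≤ p ^ t) :
    y ^ m ∣ x ^ (p ^ t * L) - 1 :=
  calc y ^ m ∣ (x ^ L - 1) ^ m := pow_dvd_pow_of_dvd hy m
    _ ∣ (x ^ L - 1) ^ p ^ t := pow_dvd_pow _ hm
    _ = x ^ (p ^ t * L) - 1 := by rw [sub_pow_expChar_pow, one_pow, ← pow_mul, mul_comm]

theorem Polynomial.Monic.isCoprime_of_irreducible_of_ne {K : Type*} [Field K] {f g : K[X]}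
    (hf : f.Monic) (hg : g.Monic) (hfi : Irreducible f) (hgi : Irreducible g) (hne : f ≠ g) :
    IsCoprime f g :=
  hfi.coprime_iff_not_dvd.2 fun hdvd =>
    hne (eq_of_monic_of_associated hf hg (hfi.associated_of_dvd hgi hdvd))

theorem Polynomial.prod_pow_dvd_X_pow_sub_one {K ι : Type*} [Field K] [Finite K] {p : ℕ}
    [ExpChar K p] [Fintype ι] {f : ι → K[X]} {m : ι → ℕ} (hmonic : ∀ i, (f i).Monic)
    (hirr : ∀ i, Irreducible (f i)) (hinj : Function.Injective f) (hf0 : ∀ i, (f i).coeff 0 ≠ 0)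
    {t : ℕ} (hm : ∀ i, m i ≤ p ^ t) :
    ∏ i, f i ^ m i ∣
      X ^ (p ^ t * Finset.univ.lcm fun i => Nat.card K ^ (f i).natDegree - 1) - 1 := by
  refine Finset.prod_dvd_of_coprime (fun i _ j _ hij => ?_) fun i _ => ?_
  · exact ((hmonic i).isCoprime_of_irreducible_of_ne (hmonic j) (hirr i) (hirr j)
      (hinj.ne hij)).pow
  · refine pow_dvd_pow_expChar_pow_mul_sub_one_of_dvd ?_ (hm i)
    exact ((hirr i).dvd_X_pow_card_pow_natDegree_sub_one_sub_one (hf0 i)).trans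
      (dvd_pow_sub_one_of_dvd (Finset.dvd_lcm (Finset.mem_univ i)))

theorem PowerSeries.coeff_add_eq_of_dvd_X_pow_sub_one {K : Type*} [CommRing K] [IsDomain K]
    {R : K[X]} {F : PowerSeries K} (hF : F * R = 1) (hR : 1 ≤ R.natDegree) {N : ℕ}
    (hN : R ∣ Polynomial.X ^ N - 1) (n : ℕ) :
    PowerSeries.coeff (n + N) F = PowerSeries.coeff n F := by
  rcases N.eq_zero_or_pos with rfl | hNpos
  · rfl
  obtain ⟨S, hS⟩ := hN
  have hXN : (Polynomial.X ^ N - 1 : K[X]).natDegree = N := by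
    simpa using natDegree_X_pow_sub_C (n := N) (r := (1 : K))
  have hS0 : S ≠ 0 := by
    rintro rfl
    rw [mul_zero] at hS
    rw [hS, natDegree_zero] at hXN
    omega
  have hSdeg : S.natDegree < n + N := by
    have := natDegree_mul (p := R) (by rintro rfl; simp at hR) hS0
    rw [← hS, hXN] at this
    omega
  have hFS : F * X ^ N - F = (S : PowerSeries K) := by
    have hcoe : ((Polynomial.X ^ N - 1 : K[X]) : PowerSeries K) = X ^ N - 1 := by simp
    rw [← mul_sub_one, ← hcoe, hS, Polynomial.coe_mul, ← mul_assoc, hF, one_mul]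
  have := congrArg (coeff (n + N)) hFS
  rwa [map_sub, coeff_mul_X_pow, Polynomial.coeff_coe, coeff_eq_zero_of_natDegree_lt hSdeg,
    sub_eq_zero, eq_comm] at this

theorem stmt_18_general (p : ℕ) [Fact p.Prime]
    (R : Polynomial (ZMod p)) (hR0 : R.coeff 0 ≠ 0) (hRdeg : 1 ≤ R.natDegree)
    (k : ℕ) (c : ZMod p)
    (Ri : Fin k → Polynomial (ZMod p)) (ei : Fin k → ℕ)
    (hmonic : ∀ i, (Ri i).Monic) (hirr : ∀ i, Irreducible (Ri i))
    (hdist : Function.Injective Ri) (hei : ∀ i, 1 ≤ ei i)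
    (hfact : R = Polynomial.C c * ∏ i, Ri i ^ ei i)
    (F : PowerSeries (ZMod p)) (hF : F * (R : PowerSeries (ZMod p)) = 1)
    (a : ℕ → ZMod p) (ha : ∀ n, a n = PowerSeries.coeff n F)
    (L e : ℕ) (hL : L = Finset.univ.lcm (fun i : Fin k => p ^ (Ri i).natDegree - 1))
    (he : e = Finset.univ.sup ei) :
    ∀ n, a (n + p ^ Nat.clog p e * L) = a n := by
  have hc : c ≠ 0 := by
    rintro rfl
    simp [hfact] at hR0
  have hRi_dvd : ∀ i, Ri i ∣ R := by
    intro i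
    rw [hfact]
    exact (dvd_pow_self _ (by have := hei i; omega)).trans <|
      (Finset.dvd_prod_of_mem (fun j => Ri j ^ ei j) (Finset.mem_univ i)).trans (dvd_mul_left _ _)
  have hRi0 : ∀ i, (Ri i).coeff 0 ≠ 0 := fun i hi0 =>
    hR0 (X_dvd_iff.1 ((X_dvd_iff.2 hi0).trans (hRi_dvd i)))
  have hei_le : ∀ i, ei i ≤ p ^ Nat.clog p e := fun i =>
    (he ▸ Finset.le_sup (Finset.mem_univ i)).trans (Nat.le_pow_clog (Fact.out : p.Prime).one_lt e)
  have hR_dvd : R ∣ X ^ (p ^ Nat.clog p e * L) - 1 := by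
    have := prod_pow_dvd_X_pow_sub_one hmonic hirr hdist hRi0 hei_le
    rw [Nat.card_zmod, ← hL] at this
    rw [hfact]
    exact (isUnit_C.2 hc.isUnit).mul_left_dvd.2 this
  intro n
  rw [ha, ha]
  exact PowerSeries.coeff_add_eq_of_dvd_X_pow_sub_one hF hRdeg hR_dvd n

/-- Let `R ∈ 𝔽_p[z]` with `R(0) ≠ 0` and `deg R ≥ 1`, factored as
`R = C c * ∏ Rᵢ^{eᵢ}` into distinct monic irreducibles.  Let
`L = lcm_i (p^{deg Rᵢ} - 1)` and `e = max_i eᵢ`.  Then the coefficient sequence of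
`1/R` is purely periodic with period length dividing `p^⌈log_p e⌉ * L`. -/
theorem stmt_18 (p : ℕ) [Fact p.Prime]
    (R : Polynomial (ZMod p)) (hR0 : R.coeff 0 ≠ 0) (hRdeg : 1 ≤ R.natDegree)
    (k : ℕ) (hk : 1 ≤ k) (c : ZMod p)
    (Ri : Fin k → Polynomial (ZMod p)) (ei : Fin k → ℕ)
    (hmonic : ∀ i, (Ri i).Monic) (hirr : ∀ i, Irreducible (Ri i))
    (hdist : Function.Injective Ri) (hei : ∀ i, 1 ≤ ei i)
    (hfact : R = Polynomial.C c * ∏ i, Ri i ^ ei i)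
    (F : PowerSeries (ZMod p)) (hF : F * (R : PowerSeries (ZMod p)) = 1)
    (a : ℕ → ZMod p) (ha : ∀ n, a n = PowerSeries.coeff n F)
    (L e : ℕ) (hL : L = Finset.univ.lcm (fun i : Fin k => p ^ (Ri i).natDegree - 1))
    (he : e = Finset.univ.sup ei) :
    ∀ n, a (n + p ^ Nat.clog p e * L) = a n :=
  stmt_18_general p R hR0 hRdeg k c Ri ei hmonic hirr hdist hei hfact F hF a ha L e hL he
end

section
/- The sequence n ↦ C(n, j) mod p (binomial coefficient, n ranging over nonnegative integers, fixed j ≥ 1) is periodic with period length p^{⌊log_p j⌋ + 1}; in particular it is periodic with period length dividing p^{⌈log_p(j+1)⌉} whenever j ≥ 1. -/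
/-!
Lucas' theorem gives `C(n + p ^ e, j) ≡ C(n, j)` whenever `j < p ^ e`, since adding `p ^ e` only
changes base-`p` digits of `n` above those of `j`. Conversely, the periods of a sequence on `ℕ`
are closed under `gcd`, so a period `m < p ^ (⌊log_p j⌋ + 1)` would produce a period
`p ^ i ≤ j`; but no `q` with `0 < q ≤ j` is a period, as `C(j - q, j) = 0 ≠ 1 = C(j, j)`.
-/

open Function

namespace Function.Periodic

variable {α : Type*} {f : ℕ → α} {c d : ℕ}

theorem of_add_nat (hc : Periodic f c) (hcd : Periodic f (c + d)) : Periodic f d := fun n => by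
  rw [← hc, add_assoc, add_comm d, hcd]

theorem nat_gcd (hc : Periodic f c) (hd : Periodic f d) : Periodic f (c.gcd d) := by
  induction c, d using Nat.gcd.induction with
  | H0 d => rwa [Nat.gcd_zero_left]
  | H1 c d _ ih =>
    have hmod : Periodic f (d % c) :=
      (hc.nsmul (d / c)).of_add_nat (by rwa [smul_eq_mul, Nat.div_add_mod'])
    rw [Nat.gcd_rec]
    exact ih hmod hc

end Function.Periodic

theorem Nat.clog_add_one_eq_log_add_one {b n : ℕ} (hb : 1 < b) (hn : n ≠ 0) :
    Nat.clog b (n + 1) = Nat.log b n + 1 :=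
  eq_of_forall_ge_iff fun k => by
    rw [Nat.clog_le_iff_le_pow hb, Nat.add_one_le_iff, ← Nat.log_lt_iff_lt_pow hb hn,
      Nat.add_one_le_iff]

theorem periodic_choose_cast_of_lt_prime_pow (p : ℕ) [Fact p.Prime] :
    ∀ {e j : ℕ}, j < p ^ e → Periodic (fun n => (n.choose j : ZMod p)) (p ^ e)
  | 0, j, h, n => by
    obtain rfl : j = 0 := by simpa using h
    simp
  | e + 1, j, h, n => by
    have hp : 0 < p := (Fact.out : p.Prime).pos
    have lucas (n : ℕ) :
        (n.choose j : ZMod p) = (n % p).choose (j % p) * (n / p).choose (j / p) := by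
      exact_mod_cast (ZMod.natCast_eq_natCast_iff _ _ _).mpr
        (Choose.choose_modEq_choose_mod_mul_choose_div_nat (p := p) (n := n) (k := j))
    have hj : j / p < p ^ e := (Nat.div_lt_iff_lt_mul hp).mpr (pow_succ p e ▸ h)
    dsimp only
    simp only [lucas, pow_succ, Nat.add_mul_mod_self_right, Nat.add_mul_div_right _ _ hp]
    exact congrArg _ (periodic_choose_cast_of_lt_prime_pow p hj (n / p))

theorem lt_of_periodic_choose_cast {R : Type*} [AddMonoidWithOne R] [NeZero (1 : R)] {j q : ℕ}
    (hq : 0 < q) (h : Periodic (fun n => (n.choose j : R)) q) : j < q := by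
  by_contra! hqj
  have hlt : j - q < j := by omega
  have : ((j - q + q).choose j : R) = (j - q).choose j := h (j - q)
  rw [Nat.sub_add_cancel hqj, Nat.choose_self, Nat.choose_eq_zero_of_lt hlt] at this
  exact one_ne_zero (by exact_mod_cast this)

theorem prime_pow_log_add_one_le_of_periodic_choose_cast (p : ℕ) [Fact p.Prime] {j m : ℕ}
    (hj : j ≠ 0) (hm : 0 < m) (h : Periodic (fun n => (n.choose j : ZMod p)) m) :
    p ^ (Nat.log p j + 1) ≤ m := by
  have hp : p.Prime := Fact.out
  set e := Nat.log p j + 1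
  have hgcd :=
    h.nat_gcd (periodic_choose_cast_of_lt_prime_pow p (Nat.lt_pow_succ_log_self hp.one_lt j))
  obtain ⟨i, -, hi⟩ := (Nat.dvd_prime_pow hp).mp (Nat.gcd_dvd_right m (p ^ e))
  have hji : j < p ^ i := hi ▸ lt_of_periodic_choose_cast (Nat.gcd_pos_of_pos_left _ hm) hgcd
  have hei : e ≤ i := (Nat.log_lt_iff_lt_pow hp.one_lt hj).mpr hji
  calc p ^ e ≤ p ^ i := Nat.pow_le_pow_right hp.pos hei
    _ = m.gcd (p ^ e) := hi.symm
    _ ≤ m := Nat.le_of_dvd hm (Nat.gcd_dvd_left _ _)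

/-- Zabek's theorem: for fixed `j ≥ 1`, the sequence `n ↦ C(n, j) mod p` is periodic
with minimal period length `p ^ (⌊log_p j⌋ + 1)`; in particular it is periodic with
period length dividing `p ^ ⌈log_p (j + 1)⌉`. -/
theorem stmt_19 (p : ℕ) [Fact p.Prime] (j : ℕ) (hj : 1 ≤ j) :
    (∀ n : ℕ, ((n + p ^ (Nat.log p j + 1)).choose j : ZMod p) = (n.choose j : ZMod p)) ∧
    (∀ m : ℕ, 0 < m → (∀ n : ℕ, ((n + m).choose j : ZMod p) = (n.choose j : ZMod p)) →
      p ^ (Nat.log p j + 1) ≤ m) ∧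
    p ^ (Nat.log p j + 1) ∣ p ^ Nat.clog p (j + 1) := by
  have hp : p.Prime := Fact.out
  refine ⟨periodic_choose_cast_of_lt_prime_pow p (Nat.lt_pow_succ_log_self hp.one_lt j),
    fun m hm h => prime_pow_log_add_one_le_of_periodic_choose_cast p (by omega) hm h, ?_⟩
  rw [Nat.clog_add_one_eq_log_add_one hp.one_lt (by omega)]
end
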